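/- (LQ problem: convergence rate of discrete-constraint optimal pairs.) In the LQ problem, for each n let (ūⁿ, X̄ⁿ) be an optimal pair of the cost J under the discrete state constraints X(t_i) ≥ 1 at the grid points t_i = i/n, i = 0,1,…,n, and let (ū, X̄) be the optimal pair under the continuous constraint X(t) ≥ 1 on [0,1], given by ū(t) = −3, X̄(t) = 3 − e^t on [0, ln 2] and ū(t) = −1, X̄(t) = 1 on (ln 2, 1]. Then there is a constant C, independent of n, such that sup_{0≤t≤1} |X̄ⁿ(t) − X̄(t)| ≤ C/n and |J(ūⁿ) − J(ū)| ≤ C/n. -/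

import Mathlib

/-!
Every trajectory with `X (i / n) ≥ 1` lies above `envelope n`, the maximum of `3 - exp t`
(forced by `X 0 = 2` and `u ≥ -3`) and, for each grid point, of the least values that can be
reached from the value `1` there, forwards with `u = -3` and backwards with `u = 3`; this is a
Grönwall comparison. On each grid cell the envelope is the maximum of a `u = -3` branch and a
`u = 3` branch which cross once, so it is itself a feasible trajectory of a bang-bang control.
Since the cost is strictly monotone on nonnegative trajectories, the optimal trajectory is the
envelope. Finally `envelope n ≤ X̄`, and past `ln 2` the bound from the last grid point keeps
the envelope within `2 (exp (1 / n) - 1) ≤ 4 / n` of `X̄ = 1`.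
-/

open MeasureTheory Set Filter Topology

noncomputable section

/-- An admissible control for the LQ problem: measurable with values in `[-3,3]`. -/
def LQAdmissible (u : ℝ → ℝ) : Prop :=
  Measurable u ∧ ∀ t, u t ∈ Set.Icc (-3 : ℝ) 3

/-- `X` solves the LQ state equation `X t = 2 + ∫₀ᵗ (X s + u s) ds` on `[0,1]`. -/
def LQTrajectory (u X : ℝ → ℝ) : Prop :=
  ContinuousOn X (Set.Icc 0 1) ∧
    ∀ s ∈ Set.Icc (0 : ℝ) 1, X s = 2 + ∫ τ in (0 : ℝ)..s, (X τ + u τ)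

/-- The LQ cost `J(u) = ∫₀¹ (Xᵘ t)² dt + (Xᵘ 1)²`. -/
def LQCost (X : ℝ → ℝ) : ℝ :=
  (∫ t in (0 : ℝ)..1, (X t) ^ 2) + (X 1) ^ 2

/-- The optimal control of the LQ problem under the continuous constraint. -/
def LQubar : ℝ → ℝ := fun t => if t ≤ Real.log 2 then (-3 : ℝ) else -1

/-- The optimal trajectory of the LQ problem under the continuous constraint. -/
def LQXbar : ℝ → ℝ := fun t => if t ≤ Real.log 2 then 3 - Real.exp t else 1

open Real

theorem mul_exp_le_of_add_integral_le {f : ℝ → ℝ} {a b K : ℝ} (hK : 0 ≤ K) (hab : a ≤ b)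
    (hf : ContinuousOn f (Icc a b)) (h : ∀ s ∈ Icc a b, f a + K * ∫ τ in a..s, f τ ≤ f s) :
    f a * exp (K * (b - a)) ≤ f b := by
  set W : ℝ → ℝ := fun s => f a + K * ∫ τ in a..s, f τ
  have hfi : IntegrableOn f (uIcc a b) := by
    rw [uIcc_of_le hab]; exact hf.integrableOn_Icc
  have hWc : ContinuousOn W (Icc a b) := by
    have := intervalIntegral.continuousOn_primitive_interval hfi
    rw [uIcc_of_le hab] at this
    exact continuousOn_const.add (continuousOn_const.mul this)
  have hW' : ∀ s ∈ Ioo a b, HasDerivAt W (K * f s) s := fun s hs =>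
    ((intervalIntegral.integral_hasDerivAt_right
      ((hf.mono (Icc_subset_Icc le_rfl hs.2.le)).intervalIntegrable_of_Icc hs.1.le)
      ((hf.mono Ioo_subset_Icc_self).stronglyMeasurableAtFilter isOpen_Ioo s hs)
      (hf.continuousAt (Icc_mem_nhds hs.1 hs.2))).const_mul K).const_add (f a)
  -- `exp (-K s) * W s` is nondecreasing since `W' = K f ≥ K W`
  have hmono : MonotoneOn (fun s => exp (-(K * s)) * W s) (Icc a b) := by
    refine monotoneOn_of_hasDerivWithinAt_nonneg (convex_Icc a b)
      ((continuous_exp.comp (continuous_const.mul continuous_id).neg).continuousOn.mul hWc)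
      (f' := fun s => exp (-(K * s)) * (K * (f s - W s))) (fun s hs => ?_) (fun s hs => ?_)
    · rw [interior_Icc] at hs
      have hE : HasDerivAt (fun s => exp (-(K * s))) (exp (-(K * s)) * -K) s := by
        simpa using ((hasDerivAt_id s).const_mul K).neg.exp
      exact ((hE.mul (hW' s hs)).congr_deriv (by ring)).hasDerivWithinAt
    · rw [interior_Icc] at hs
      have := h s (Ioo_subset_Icc_self hs)
      have : 0 ≤ f s - W s := by simp only [W]; linarith
      positivity
  have hWb : W b ≤ f b := h b (right_mem_Icc.2 hab)
  have hWa : W a = f a := by simp [W]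
  have hab' := hmono (left_mem_Icc.2 hab) (right_mem_Icc.2 hab) hab
  simp only [hWa] at hab'
  calc f a * exp (K * (b - a)) = exp (K * b) * (exp (-(K * a)) * f a) := by
        rw [mul_sub, exp_sub, exp_neg]; field_simp
    _ ≤ exp (K * b) * (exp (-(K * b)) * W b) := by gcongr
    _ ≤ exp (K * b) * (exp (-(K * b)) * f b) := by gcongr
    _ = f b := by rw [exp_neg]; field_simp

theorem ContinuousOn.eqOn_zero_of_integral_eq_zero {g : ℝ → ℝ} {a b : ℝ} (hab : a < b)
    (hg : ContinuousOn g (Icc a b)) (h0 : ∀ t ∈ Icc a b, 0 ≤ g t)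
    (hint : ∫ t in a..b, g t = 0) : EqOn g 0 (Icc a b) := by
  have hae : 0 ≤ᵐ[volume.restrict (Ioc a b)] g :=
    (ae_restrict_iff' measurableSet_Ioc).2 (ae_of_all _ fun t ht => h0 t (Ioc_subset_Icc_self ht))
  have := (intervalIntegral.integral_eq_zero_iff_of_le_of_nonneg_ae hab.le hae
    (hg.intervalIntegrable_of_Icc hab.le)).1 hint
  rw [Measure.restrict_congr_set Ioc_ae_eq_Icc] at this
  exact Measure.eqOn_Icc_of_ae_eq volume hab.ne this hg continuousOn_const

theorem LQAdmissible.intervalIntegrable {u : ℝ → ℝ} (hu : LQAdmissible u) (a b : ℝ) :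
    IntervalIntegrable u volume a b := by
  refine (intervalIntegrable_iff.2 <| Measure.integrableOn_of_bounded (M := 3) ?_
    hu.1.aestronglyMeasurable (ae_of_all _ fun t => abs_le.2 (hu.2 t)))
  exact measure_Ioc_lt_top.ne

namespace LQTrajectory

variable {u X : ℝ → ℝ}

theorem apply_zero (hX : LQTrajectory u X) : X 0 = 2 := by
  simpa using hX.2 0 (left_mem_Icc.2 zero_le_one)

theorem intervalIntegrable (hX : LQTrajectory u X) {a b : ℝ} (ha : a ∈ Icc (0 : ℝ) 1)
    (hb : b ∈ Icc (0 : ℝ) 1) : IntervalIntegrable X volume a b :=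
  (hX.1.mono (uIcc_subset_Icc ha hb)).intervalIntegrable

theorem sub_eq_integral (hX : LQTrajectory u X) (hu : LQAdmissible u) {a b : ℝ}
    (ha : a ∈ Icc (0 : ℝ) 1) (hb : b ∈ Icc (0 : ℝ) 1) :
    X b - X a = ∫ τ in a..b, (X τ + u τ) := by
  have h0 := left_mem_Icc.2 (zero_le_one' ℝ)
  rw [hX.2 b hb, hX.2 a ha, add_sub_add_left_eq_sub, intervalIntegral.integral_interval_sub_left
    ((hX.intervalIntegrable h0 hb).add (hu.intervalIntegrable 0 b))
    ((hX.intervalIntegrable h0 ha).add (hu.intervalIntegrable 0 a))]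

theorem sub_three_mul_exp_le (hX : LQTrajectory u X) (hu : LQAdmissible u) {a t : ℝ}
    (ha : 0 ≤ a) (hat : a ≤ t) (ht : t ≤ 1) : (X a - 3) * exp (t - a) ≤ X t - 3 := by
  have hsub : Icc a t ⊆ Icc 0 1 := Icc_subset_Icc ha ht
  have ha' := hsub (left_mem_Icc.2 hat)
  simpa using mul_exp_le_of_add_integral_le (f := fun s => X s - 3) zero_le_one hat
    ((hX.1.mono hsub).sub continuousOn_const) fun s hs => by
      have hXs := hX.sub_eq_integral hu ha' (hsub hs)
      have : ∫ τ in a..s, (X τ - 3) ≤ ∫ τ in a..s, (X τ + u τ) :=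
        intervalIntegral.integral_mono_on hs.1
          ((hX.intervalIntegrable ha' (hsub hs)).sub intervalIntegrable_const)
          ((hX.intervalIntegrable ha' (hsub hs)).add (hu.intervalIntegrable a s))
          fun τ _ => by linarith [(hu.2 τ).1]
      rw [one_mul]; linarith

theorem add_three_le_mul_exp (hX : LQTrajectory u X) (hu : LQAdmissible u) {a t : ℝ}
    (ha : 0 ≤ a) (hat : a ≤ t) (ht : t ≤ 1) : X t + 3 ≤ (X a + 3) * exp (t - a) := by
  have hsub : Icc a t ⊆ Icc 0 1 := Icc_subset_Icc ha ht
  have ha' := hsub (left_mem_Icc.2 hat)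
  have := mul_exp_le_of_add_integral_le (f := fun s => -(X s + 3)) zero_le_one hat
    ((hX.1.mono hsub).add continuousOn_const).neg fun s hs => by
      have hXs := hX.sub_eq_integral hu ha' (hsub hs)
      have : ∫ τ in a..s, (X τ + u τ) ≤ ∫ τ in a..s, (X τ + 3) :=
        intervalIntegral.integral_mono_on hs.1
          ((hX.intervalIntegrable ha' (hsub hs)).add (hu.intervalIntegrable a s))
          ((hX.intervalIntegrable ha' (hsub hs)).add intervalIntegrable_const)
          fun τ _ => by linarith [(hu.2 τ).2]
      rw [one_mul, intervalIntegral.integral_neg]; linarith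
  rw [one_mul] at this; linarith

end LQTrajectory

/-- The least value at time `s + x` of a trajectory with `X s ≥ 1`: for `x ≥ 0` it is reached
with the control `-3`, for `x ≤ 0` with the control `3`. -/
def constraintBound (x : ℝ) : ℝ := if 0 ≤ x then 3 - 2 * exp x else 4 * exp x - 3

theorem constraintBound_of_nonneg {x : ℝ} (hx : 0 ≤ x) : constraintBound x = 3 - 2 * exp x :=
  if_pos hx

theorem constraintBound_of_nonpos {x : ℝ} (hx : x ≤ 0) : constraintBound x = 4 * exp x - 3 := by
  rcases hx.lt_or_eq with hx | rfl
  · exact if_neg hx.not_ge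
  · norm_num [constraintBound]

theorem constraintBound_le_one (x : ℝ) : constraintBound x ≤ 1 := by
  rcases le_total 0 x with hx | hx
  · rw [constraintBound_of_nonneg hx]; linarith [one_le_exp hx]
  · rw [constraintBound_of_nonpos hx]; linarith [exp_le_one_iff.2 hx]

theorem continuous_constraintBound : Continuous constraintBound :=
  Continuous.if_le (by fun_prop) (by fun_prop) continuous_const continuous_id
    fun x hx => by simp [← hx]; norm_num

theorem constraintBound_antitoneOn : AntitoneOn constraintBound (Ici 0) := fun x hx y _ hxy => by
  rw [constraintBound_of_nonneg hx, constraintBound_of_nonneg (hx.out.trans hxy)]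
  linarith [exp_le_exp.2 hxy]

theorem constraintBound_monotoneOn : MonotoneOn constraintBound (Iic 0) := fun x _ y hy hxy => by
  rw [constraintBound_of_nonpos (hxy.trans hy.out), constraintBound_of_nonpos hy]
  linarith [exp_le_exp.2 hxy]

theorem LQTrajectory.constraintBound_le {u X : ℝ → ℝ} (hX : LQTrajectory u X)
    (hu : LQAdmissible u) {s t : ℝ} (hs : s ∈ Icc (0 : ℝ) 1) (hXs : 1 ≤ X s)
    (ht : t ∈ Icc (0 : ℝ) 1) : constraintBound (t - s) ≤ X t := by
  rcases le_total s t with hst | hts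
  · rw [constraintBound_of_nonneg (sub_nonneg.2 hst)]
    nlinarith [hX.sub_three_mul_exp_le hu hs.1 hst ht.2, exp_pos (t - s)]
  · rw [constraintBound_of_nonpos (sub_nonpos.2 hts)]
    have h := hX.add_three_le_mul_exp hu ht.1 hts hs.2
    have h4 : 4 * exp (t - s) ≤ (X t + 3) * exp (s - t) * exp (t - s) := by
      gcongr; linarith
    rw [mul_assoc, ← exp_add, sub_add_sub_cancel, sub_self, exp_zero, mul_one] at h4
    linarith

/-- The lower envelope of the trajectories satisfying `X (i / n) ≥ 1`, `i ≤ n`; the term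
`3 - exp t` is the bound imposed by `X 0 = 2`. -/
def envelope (n : ℕ) (t : ℝ) : ℝ :=
  max (3 - exp t)
    ((Finset.range (n + 1)).sup' Finset.nonempty_range_add_one fun i => constraintBound (t - i / n))

theorem continuous_envelope (n : ℕ) : Continuous (envelope n) :=
  (by fun_prop : Continuous fun t => 3 - exp t).max <|
    Continuous.finset_sup'_apply _ fun _ _ => continuous_constraintBound.comp (by fun_prop)

theorem LQTrajectory.envelope_le {u X : ℝ → ℝ} (hX : LQTrajectory u X) (hu : LQAdmissible u)
    {n : ℕ} (hcon : ∀ i ≤ n, 1 ≤ X ((i : ℝ) / n)) {t : ℝ} (ht : t ∈ Icc (0 : ℝ) 1) :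
    envelope n t ≤ X t := by
  refine max_le ?_ (Finset.sup'_le _ _ fun i hi => ?_)
  · have := hX.sub_three_mul_exp_le hu le_rfl ht.1 ht.2
    rw [hX.apply_zero, sub_zero] at this
    linarith
  · have hi : i ≤ n := Nat.lt_succ_iff.1 (Finset.mem_range.1 hi)
    exact hX.constraintBound_le hu ⟨by positivity, div_le_one_of_le₀ (by exact_mod_cast hi)
      n.cast_nonneg⟩ (hcon i hi) ht

theorem three_sub_exp_le_envelope (n : ℕ) (t : ℝ) : 3 - exp t ≤ envelope n t :=
  le_max_left _ _

theorem constraintBound_le_envelope {n i : ℕ} (hi : i ≤ n) (t : ℝ) :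
    constraintBound (t - i / n) ≤ envelope n t :=
  le_max_of_le_right <| Finset.le_sup' (fun i : ℕ => constraintBound (t - i / n))
    (Finset.mem_range.2 (Nat.lt_succ_of_le hi))

theorem one_le_envelope_grid {n i : ℕ} (hi : i ≤ n) : 1 ≤ envelope n ((i : ℝ) / n) := by
  have := constraintBound_le_envelope hi ((i : ℝ) / n)
  rw [sub_self, constraintBound_of_nonneg le_rfl, exp_zero] at this
  linarith

theorem envelope_zero (n : ℕ) : envelope n 0 = 2 := by
  rw [envelope, exp_zero, max_eq_left]
  · norm_num
  · exact (Finset.sup'_le _ _ fun i _ => constraintBound_le_one _).trans (by norm_num)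

theorem envelope_nonneg (n : ℕ) {t : ℝ} (ht : t ≤ 1) : 0 ≤ envelope n t := by
  linarith [three_sub_exp_le_envelope n t, exp_le_exp.2 ht, exp_one_lt_d9]

theorem one_le_LQXbar (t : ℝ) : 1 ≤ LQXbar t := by
  unfold LQXbar
  split_ifs with h
  · linarith [exp_le_exp.2 h, exp_log two_pos]
  · exact le_rfl

theorem LQXbar_le_two {t : ℝ} (ht : 0 ≤ t) : LQXbar t ≤ 2 := by
  unfold LQXbar
  split_ifs
  · linarith [one_le_exp ht]
  · norm_num

theorem continuous_LQXbar : Continuous LQXbar :=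
  Continuous.if_le (by fun_prop) continuous_const continuous_id continuous_const
    fun t ht => by rw [ht, exp_log two_pos]; norm_num

theorem envelope_le_LQXbar (n : ℕ) (t : ℝ) : envelope n t ≤ LQXbar t := by
  refine max_le ?_
    ((Finset.sup'_le _ _ fun i _ => constraintBound_le_one _).trans (one_le_LQXbar t))
  unfold LQXbar
  split_ifs with h
  · exact le_rfl
  · linarith [exp_lt_exp.2 (not_le.1 h), exp_log two_pos]

theorem mem_Ico_floor_mul_div {n : ℕ} (hn : 0 < n) {t : ℝ} (ht : 0 ≤ t) :
    t ∈ Ico ((⌊n * t⌋₊ : ℝ) / n) ((⌊n * t⌋₊ + 1) / n) := by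
  have hn' : (0 : ℝ) < n := by exact_mod_cast hn
  constructor
  · rw [div_le_iff₀' hn']; exact Nat.floor_le (by positivity)
  · rw [lt_div_iff₀' hn']; exact Nat.lt_floor_add_one _

theorem LQXbar_sub_envelope_le {n : ℕ} (hn : 0 < n) {t : ℝ} (ht : t ∈ Icc (0 : ℝ) 1) :
    LQXbar t - envelope n t ≤ 4 / n := by
  have h4n : (0 : ℝ) ≤ 4 / n := by positivity
  unfold LQXbar
  split_ifs
  · linarith [three_sub_exp_le_envelope n t]
  -- past `log 2`, compare with the bound coming from the last grid point `k / n ≤ t`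
  set k := ⌊n * t⌋₊
  have hk : k ≤ n := Nat.floor_le_of_le (by nlinarith [ht.2])
  have ⟨hkt, htk⟩ := mem_Ico_floor_mul_div hn ht.1
  have hx : t - k / n ≤ 1 / n := by rw [add_div] at htk; linarith
  have h1n : 1 / (n : ℝ) ≤ 1 := div_le_one_of_le₀ (by exact_mod_cast hn) n.cast_nonneg
  have hE := constraintBound_le_envelope hk t
  rw [constraintBound_of_nonneg (sub_nonneg.2 hkt)] at hE
  have := abs_exp_sub_one_le (x := t - k / n) (by rw [abs_le]; constructor <;> linarith)
  rw [abs_le, abs_of_nonneg (sub_nonneg.2 hkt)] at this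
  linarith [this.2, mul_div_assoc (4 : ℝ) 1 n]

theorem hasDerivAt_max_exp_branches (c d : ℝ) {t : ℝ} (ht : 3 - c * exp t ≠ d * exp t - 3) :
    HasDerivAt (fun τ => max (3 - c * exp τ) (d * exp τ - 3))
      (max (3 - c * exp t) (d * exp t - 3) +
        if d * exp t - 3 < 3 - c * exp t then -3 else 3) t := by
  have hc : ContinuousAt (fun τ => 3 - c * exp τ) t := by fun_prop
  have hd : ContinuousAt (fun τ => d * exp τ - 3) t := by fun_prop
  rcases ht.lt_or_gt with h | h
  · rw [max_eq_right h.le, if_neg h.not_gt]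
    refine HasDerivAt.congr_of_eventuallyEq ?_
      ((hc.eventually_lt hd h).mono fun τ hτ => max_eq_right hτ.le)
    convert ((hasDerivAt_exp t).const_mul d).sub_const 3 using 1
    ring
  · rw [max_eq_left h.le, if_pos h]
    refine HasDerivAt.congr_of_eventuallyEq ?_
      ((hd.eventually_lt hc h).mono fun τ hτ => max_eq_left hτ.le)
    convert ((hasDerivAt_exp t).const_mul c).const_sub 3 using 1
    ring

theorem subsingleton_setOf_exp_branches_eq (c d : ℝ) :
    {t | 3 - c * exp t = d * exp t - 3}.Subsingleton := fun s (hs : _ = _) t (ht : _ = _) => by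
  have hs' : (c + d) * exp s = 6 := by linarith
  have ht' : (c + d) * exp t = 6 := by linarith
  have hcd : c + d ≠ 0 := by rintro h; rw [h, zero_mul] at hs'; norm_num at hs'
  exact exp_injective (mul_left_cancel₀ hcd (hs'.trans ht'.symm))

/-- `3 - descentCoeff n j * exp t = max (3 - exp t) (3 - 2 * exp (t - j / n))` merges the bounds
from `X 0 = 2` and `X (j / n) ≥ 1`; `ascentCoeff n j * exp t - 3` is the bound from
`X ((j + 1) / n) ≥ 1`. -/
def descentCoeff (n j : ℕ) : ℝ := min 1 (2 * exp (-(j / n)))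

def ascentCoeff (n j : ℕ) : ℝ := 4 * exp (-((j + 1) / n))

theorem envelope_eq_of_mem_cell {n j : ℕ} (hj : j < n) {t : ℝ}
    (ht : t ∈ Icc ((j : ℝ) / n) ((j + 1) / n)) :
    envelope n t = max (3 - descentCoeff n j * exp t) (ascentCoeff n j * exp t - 3) := by
  have hj1 : ((j + 1 : ℕ) : ℝ) = j + 1 := by push_cast; rfl
  have hdiv {p q : ℝ} (h : p ≤ q) : p / n ≤ q / n := div_le_div_of_nonneg_right h n.cast_nonneg
  have hsup : (Finset.range (n + 1)).sup' Finset.nonempty_range_add_one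
        (fun i => constraintBound (t - i / n)) =
      max (constraintBound (t - j / n)) (constraintBound (t - (j + 1) / n)) := by
    refine le_antisymm (Finset.sup'_le _ _ fun i _ => ?_) (max_le ?_ ?_)
    · rcases le_or_gt i j with hij | hij
      · have hij' := hdiv (Nat.cast_le.2 hij)
        exact le_max_of_le_left (constraintBound_antitoneOn (sub_nonneg.2 ht.1)
          (sub_nonneg.2 (hij'.trans ht.1)) (sub_le_sub_left hij' t))
      · have hij' := hdiv (show (j : ℝ) + 1 ≤ i by exact_mod_cast hij)
        exact le_max_of_le_right (constraintBound_monotoneOn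
          (sub_nonpos.2 (ht.2.trans hij')) (sub_nonpos.2 ht.2) (sub_le_sub_left hij' t))
    · exact Finset.le_sup' (fun i : ℕ => constraintBound (t - i / n))
        (Finset.mem_range.2 (by omega))
    · have := Finset.le_sup' (fun i : ℕ => constraintBound (t - i / n))
        (Finset.mem_range.2 (show j + 1 < n + 1 by omega))
      rwa [hj1] at this
  have hc : descentCoeff n j * exp t = min (exp t) (2 * exp (t - j / n)) := by
    rw [descentCoeff, min_mul_of_nonneg _ _ (exp_pos t).le, one_mul, mul_assoc, ← exp_add,
      neg_add_eq_sub]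
  have hd : ascentCoeff n j * exp t = 4 * exp (t - (j + 1) / n) := by
    rw [ascentCoeff, mul_assoc, ← exp_add, neg_add_eq_sub]
  rw [envelope, hsup, ← max_assoc, constraintBound_of_nonneg (sub_nonneg.2 ht.1),
    constraintBound_of_nonpos (sub_nonpos.2 ht.2), max_sub_sub_left, hc, hd]

def envelopeControl (n : ℕ) (t : ℝ) : ℝ :=
  if ascentCoeff n ⌊n * t⌋₊ * exp t - 3 < 3 - descentCoeff n ⌊n * t⌋₊ * exp t then -3 else 3

theorem envelopeControl_admissible (n : ℕ) : LQAdmissible (envelopeControl n) := by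
  have hj : Measurable fun t : ℝ => ⌊n * t⌋₊ := Nat.measurable_floor.comp (measurable_const_mul _)
  refine ⟨Measurable.ite (measurableSet_lt ?_ ?_) measurable_const measurable_const, fun t => ?_⟩
  · exact (((measurable_from_nat (f := ascentCoeff n)).comp hj).mul measurable_exp).sub_const 3
  · exact measurable_const.sub
      (((measurable_from_nat (f := descentCoeff n)).comp hj).mul measurable_exp)
  · unfold envelopeControl; split_ifs <;> norm_num

theorem hasDerivAt_envelope {n : ℕ} (hn : 0 < n) {t : ℝ} (ht : t ∈ Ioo (0 : ℝ) 1)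
    (hgrid : ∀ j : ℕ, t ≠ j / n)
    (hswitch : ∀ j : ℕ, 3 - descentCoeff n j * exp t ≠ ascentCoeff n j * exp t - 3) :
    HasDerivAt (envelope n) (envelope n t + envelopeControl n t) t := by
  obtain ⟨hjt, htj⟩ := mem_Ico_floor_mul_div hn ht.1.le
  have hj : ⌊n * t⌋₊ < n := (Nat.floor_lt (mul_nonneg n.cast_nonneg ht.1.le)).2 (by
    have : (0 : ℝ) < n := by exact_mod_cast hn
    nlinarith [ht.2])
  have hcell : Ioo ((⌊n * t⌋₊ : ℝ) / n) ((⌊n * t⌋₊ + 1) / n) ∈ 𝓝 t :=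
    Ioo_mem_nhds (hjt.lt_of_ne (hgrid _).symm) htj
  have := (hasDerivAt_max_exp_branches _ _ (hswitch ⌊n * t⌋₊)).congr_of_eventuallyEq
    (Filter.mem_of_superset hcell fun τ hτ => envelope_eq_of_mem_cell hj (Ioo_subset_Icc_self hτ))
  rwa [← envelope_eq_of_mem_cell hj ⟨hjt, htj.le⟩] at this

theorem envelope_isLQTrajectory {n : ℕ} (hn : 0 < n) :
    LQTrajectory (envelopeControl n) (envelope n) := by
  refine ⟨(continuous_envelope n).continuousOn, fun s hs => ?_⟩
  set S : Set ℝ := ⋃ j : ℕ,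
    ({(j : ℝ) / n} ∪ {t | 3 - descentCoeff n j * exp t = ascentCoeff n j * exp t - 3})
  have hS : S.Countable := countable_iUnion fun j =>
    (countable_singleton _).union (subsingleton_setOf_exp_branches_eq _ _).countable
  rw [integral_eq_of_hasDerivAt_off_countable_of_le _ _ hs.1 hS
    (continuous_envelope n).continuousOn (fun t ht => ?_)
    (((continuous_envelope n).intervalIntegrable 0 s).add
      ((envelopeControl_admissible n).intervalIntegrable 0 s)), envelope_zero]
  · ring
  · simp only [S, Set.mem_sdiff, mem_iUnion, mem_union, mem_singleton_iff, mem_ofPred_eq,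
      not_exists, not_or] at ht
    exact hasDerivAt_envelope hn ⟨ht.1.1, ht.1.2.trans_le hs.2⟩ (fun j => (ht.2 j).1)
      fun j => (ht.2 j).2

theorem abs_LQCost_sub_le {X Y : ℝ → ℝ} (hX : ContinuousOn X (Icc 0 1))
    (hY : ContinuousOn Y (Icc 0 1)) {ε M : ℝ} (hε : ∀ t ∈ Icc (0 : ℝ) 1, |X t - Y t| ≤ ε)
    (hM : ∀ t ∈ Icc (0 : ℝ) 1, |X t + Y t| ≤ M) : |LQCost X - LQCost Y| ≤ 2 * (M * ε) := by
  have hsq : ∀ t ∈ Icc (0 : ℝ) 1, |X t ^ 2 - Y t ^ 2| ≤ M * ε := fun t ht => by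
    rw [sq_sub_sq, abs_mul]
    exact mul_le_mul (hM t ht) (hε t ht) (abs_nonneg _) ((abs_nonneg _).trans (hM t ht))
  have hint := intervalIntegral.norm_integral_le_of_norm_le_const
    (f := fun t => X t ^ 2 - Y t ^ 2) fun t ht =>
      hsq t (Ioc_subset_Icc_self (by rwa [uIoc_of_le zero_le_one] at ht))
  rw [sub_zero, abs_one, mul_one, Real.norm_eq_abs] at hint
  have hXi : IntervalIntegrable (fun t => X t ^ 2) volume 0 1 :=
    (hX.pow 2).intervalIntegrable_of_Icc zero_le_one
  have hYi : IntervalIntegrable (fun t => Y t ^ 2) volume 0 1 :=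
    (hY.pow 2).intervalIntegrable_of_Icc zero_le_one
  rw [LQCost, LQCost, add_sub_add_comm, ← intervalIntegral.integral_sub hXi hYi, two_mul]
  exact (abs_add_le _ _).trans (add_le_add hint (hsq 1 (right_mem_Icc.2 zero_le_one)))

theorem eqOn_of_LQCost_le {X Y : ℝ → ℝ} (hX : ContinuousOn X (Icc 0 1))
    (hY : ContinuousOn Y (Icc 0 1)) (hY0 : ∀ t ∈ Icc (0 : ℝ) 1, 0 ≤ Y t)
    (hYX : ∀ t ∈ Icc (0 : ℝ) 1, Y t ≤ X t) (hJ : LQCost X ≤ LQCost Y) : EqOn X Y (Icc 0 1) := by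
  have hsq : ∀ t ∈ Icc (0 : ℝ) 1, 0 ≤ X t ^ 2 - Y t ^ 2 := fun t ht =>
    sub_nonneg.2 (pow_le_pow_left₀ (hY0 t ht) (hYX t ht) 2)
  have hint : ∫ t in (0 : ℝ)..1, (X t ^ 2 - Y t ^ 2) = 0 := by
    have h0 := intervalIntegral.integral_nonneg (μ := volume) zero_le_one hsq
    have h1 := hsq 1 (right_mem_Icc.2 zero_le_one)
    have hXi : IntervalIntegrable (fun t => X t ^ 2) volume 0 1 :=
      (hX.pow 2).intervalIntegrable_of_Icc zero_le_one
    have hYi : IntervalIntegrable (fun t => Y t ^ 2) volume 0 1 :=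
      (hY.pow 2).intervalIntegrable_of_Icc zero_le_one
    rw [intervalIntegral.integral_sub hXi hYi] at h0 ⊢
    rw [LQCost, LQCost] at hJ
    linarith
  intro t ht
  have : X t ^ 2 - Y t ^ 2 = 0 :=
    ((hX.pow 2).sub (hY.pow 2)).eqOn_zero_of_integral_eq_zero zero_lt_one hsq hint ht
  nlinarith [hY0 t ht, hYX t ht]

/-- Rate of convergence `C/n` of the optimal pairs of the discretely
constrained LQ problems towards the continuously constrained optimal pair. -/
theorem stmt_13
    (un Xn : ℕ → ℝ → ℝ)
    -- for each `n`, `(un n, Xn n)` is an optimal pair under the discrete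
    -- constraints `X(i/n) ≥ 1`, `i = 0,…,n`
    (hdisc : ∀ n : ℕ, 0 < n →
      LQAdmissible (un n) ∧ LQTrajectory (un n) (Xn n) ∧
      (∀ i ≤ n, 1 ≤ Xn n ((i : ℝ) / n)) ∧
      (∀ u X : ℝ → ℝ, LQAdmissible u → LQTrajectory u X →
        (∀ i ≤ n, 1 ≤ X ((i : ℝ) / n)) → LQCost (Xn n) ≤ LQCost X)) :
    ∃ C : ℝ, ∀ n : ℕ, 0 < n →
      (∀ t ∈ Set.Icc (0 : ℝ) 1, |Xn n t - LQXbar t| ≤ C / n) ∧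
      |LQCost (Xn n) - LQCost LQXbar| ≤ C / n := by
  refine ⟨32, fun n hn => ?_⟩
  obtain ⟨hu, hX, hcon, hopt⟩ := hdisc n hn
  have hE := envelope_isLQTrajectory hn
  have heq : EqOn (Xn n) (envelope n) (Icc 0 1) :=
    eqOn_of_LQCost_le hX.1 hE.1 (fun t ht => envelope_nonneg n ht.2)
      (fun t ht => hX.envelope_le hu hcon ht)
      (hopt _ _ (envelopeControl_admissible n) hE fun i hi => one_le_envelope_grid hi)
  have hdiff : ∀ t ∈ Icc (0 : ℝ) 1, |Xn n t - LQXbar t| ≤ 4 / n := fun t ht => by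
    rw [heq ht, abs_sub_comm, abs_of_nonneg (sub_nonneg.2 (envelope_le_LQXbar n t))]
    exact LQXbar_sub_envelope_le hn ht
  have hsum : ∀ t ∈ Icc (0 : ℝ) 1, |Xn n t + LQXbar t| ≤ 4 := fun t ht => by
    rw [heq ht, abs_of_nonneg (add_nonneg (envelope_nonneg n ht.2)
      (zero_le_one.trans (one_le_LQXbar t)))]
    linarith [envelope_le_LQXbar n t, LQXbar_le_two ht.1]
  refine ⟨fun t ht => (hdiff t ht).trans (by gcongr; norm_num), ?_⟩
  calc _ ≤ 2 * (4 * (4 / (n : ℝ))) :=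
        abs_LQCost_sub_le hX.1 continuous_LQXbar.continuousOn hdiff hsum
    _ = 32 / n := by ring
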